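/- arXiv:0708.3352 — 4 statements merged into one kernel-verified Lean document; each statement's English description precedes it below -/
import Mathlib

section
/- Let g ∈ (0,4) be a constant. For every regular perfect fluid solution with non-decreasing equation of state f whose pressure–density ratio satisfies p(r)/f(p(r)) < 2/√g − 1 for all r ∈ [0,R), the inequality Φ(m(r)/r, 4π r² p(r)) ≥ g holds for all r ∈ (0,R), where Φ(M,P) = 9M[2(2M+P) − (3M+P)²] / ((1−2M)(3M+P)²). -/
/-!
Clearing denominators, `g ≤ Φ(M, P)` for `0 < M < 1/2` becomes `H(M, P) ≤ 0` for the cubic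
`H = buchdahlPoly g`. Along a solution put `M = m/r`, `P = 4πr²p`, `Q = 4πr²ρ`. Near the regular
centre `H(M, P)` is `r⁴` times a quantity tending to the quadratic part of `H` at the central
values, which is negative by the bound on `p/ρ` at `r = 0`. The TOV equations give
`r (1 - 2M) H' = (4 - 14M - 2P) H + (Q - 3M) D` with `D = buchdahlDensityCoeff g M P`.
A non-decreasing equation of state makes the density non-increasing outwards, so `Q ≤ 3M`, and
the bound on `p/ρ` makes `D > 0` wherever `H = 0`. Hence just below a first zero of `H` we get
`H' ≤ K H`, so `H e^{-Kr}` is non-increasing there, which forces `H ≥ 0` before the zero: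
`H` stays negative.
-/

open Set Filter Topology Real

noncomputable section

def buchdahlPhi (M P : ℝ) : ℝ :=
  9 * M * (2 * (2 * M + P) - (3 * M + P) ^ 2) / ((1 - 2 * M) * (3 * M + P) ^ 2)

def buchdahlQuadratic (g M P : ℝ) : ℝ :=
  g * (3 * M + P) ^ 2 - 18 * M * (3 * M + P) + 18 * M ^ 2

/-- `(1 - 2M)(3M + P)² (Φ(M, P) - g) = -buchdahlPoly g M P`. -/
def buchdahlPoly (g M P : ℝ) : ℝ :=
  buchdahlQuadratic g M P + (9 - 2 * g) * M * (3 * M + P) ^ 2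

/-- `(1 - 2M) ∂H/∂M - (M + P) ∂H/∂P` for `H = buchdahlPoly g`: the coefficient of the density
term `Q - 3M` in `buchdahlPolyTOVDeriv`. -/
def buchdahlDensityCoeff (g M P : ℝ) : ℝ :=
  (1 - 2 * M) * ((9 - 2 * g) * (3 * M + P) ^ 2 + 6 * (g + (9 - 2 * g) * M) * (3 * M + P)
      - 18 * (3 * M + P) - 18 * M)
    - (M + P) * (2 * (g + (9 - 2 * g) * M) * (3 * M + P) - 18 * M)

/-- The derivative of `r ↦ buchdahlPoly g (m r / r) (4π r² p r)` along a TOV solution,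
with `Q = 4π r² ρ`. -/
def buchdahlPolyTOVDeriv (g M P Q x : ℝ) : ℝ :=
  ((4 - 14 * M - 2 * P) * buchdahlPoly g M P + (Q - 3 * M) * buchdahlDensityCoeff g M P) /
    (x * (1 - 2 * M))

end

lemma mul_sq_lt_sq_of_sqrt_mul_lt {g s c : ℝ} (hs : 0 ≤ s) (h : √g * s < c) :
    g * s ^ 2 < c ^ 2 := by
  rcases le_or_gt g 0 with hg | hg
  · have hc : 0 < c := (mul_nonneg (sqrt_nonneg g) hs).trans_lt h
    nlinarith [mul_nonpos_of_nonpos_of_nonneg hg (sq_nonneg s)]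
  · calc g * s ^ 2 = (√g * s) ^ 2 := by rw [mul_pow, sq_sqrt hg.le]
      _ < c ^ 2 := by gcongr

lemma sqrt_mul_add_lt_of_div_lt {g ρ p c : ℝ} (hg : 0 < g) (hρ : 0 < ρ) (hc : 0 < c)
    (h : p / ρ < 2 / √g - 1) : √g * (c * ρ + c * p) < 2 * (c * ρ) := by
  have hsg := sqrt_pos.mpr hg
  rw [div_lt_iff₀ hρ, sub_mul, div_mul_eq_mul_div, lt_sub_iff_add_lt, lt_div_iff₀ hsg] at h
  nlinarith

lemma sqrt_mul_lt_of_le_three_mul {g M P Q : ℝ} (hg : g < 4) (hQ : Q ≤ 3 * M)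
    (h : √g * (Q + P) < 2 * Q) : √g * (3 * M + P) < 6 * M := by
  have hsg : √g < 2 := by rw [sqrt_lt' two_pos]; linarith
  nlinarith

lemma buchdahlPoly_mul_mul (g t a b : ℝ) :
    buchdahlPoly g (t * a) (t * b) =
      t ^ 2 * (buchdahlQuadratic g a b + t * ((9 - 2 * g) * a * (3 * a + b) ^ 2)) := by
  unfold buchdahlPoly buchdahlQuadratic; ring

section

variable {g M P : ℝ}

lemma le_buchdahlPhi_of_buchdahlPoly_nonpos (hM : 0 < M) (hM1 : 2 * M < 1) (hP : 0 ≤ P)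
    (h : buchdahlPoly g M P ≤ 0) : g ≤ buchdahlPhi M P := by
  unfold buchdahlPhi
  rw [le_div_iff₀ (by positivity)]
  unfold buchdahlPoly buchdahlQuadratic at h
  nlinarith

lemma buchdahlQuadratic_neg (hM : 0 < M) (hP : 0 < P)
    (hs : √g * (3 * M + P) < 6 * M) : buchdahlQuadratic g M P < 0 := by
  have hg := mul_sq_lt_sq_of_sqrt_mul_lt (by positivity) hs
  unfold buchdahlQuadratic
  nlinarith

lemma buchdahlDensityCoeff_pos (hM : 0 < M) (hM1 : 2 * M < 1) (hP : 0 < P)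
    (hs : √g * (3 * M + P) < 6 * M) (h : buchdahlPoly g M P = 0) :
    0 < buchdahlDensityCoeff g M P := by
  set s := 3 * M + P
  have hg := mul_sq_lt_sq_of_sqrt_mul_lt (by positivity) hs
  unfold buchdahlPoly buchdahlQuadratic at h
  have hfactor : s * buchdahlDensityCoeff g M P =
      9 * (s - 2 * M) * (s ^ 2 - 2 * s + 6 * M - 8 * M ^ 2) := by
    unfold buchdahlDensityCoeff; linear_combination (6 - 8 * M - 4 * s) * h
  have hq : 0 < s ^ 2 - 2 * s + 6 * M - 8 * M ^ 2 := by
    have h1 : (1 - 2 * M) * (g * s ^ 2) = 18 * M * s - 18 * M ^ 2 - 9 * M * s ^ 2 := by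
      linear_combination h
    have h2 : (1 - 2 * M) * (g * s ^ 2) < (1 - 2 * M) * (6 * M) ^ 2 := by gcongr
    nlinarith
  have hs2 : 0 < s - 2 * M := by simp only [s]; linarith
  have hs0 : 0 < s := by positivity
  exact pos_of_mul_pos_right (hfactor ▸ by positivity) hs0.le

end

lemma hasDerivAt_buchdahlPoly_comp {g Q x : ℝ} {M P : ℝ → ℝ} (hx : x ≠ 0) (hM1 : 2 * M x ≠ 1)
    (hM : HasDerivAt M ((Q - M x) / x) x)
    (hP : HasDerivAt P (2 * P x / x - (Q + P x) * (M x + P x) / (x * (1 - 2 * M x))) x) :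
    HasDerivAt (fun y => buchdahlPoly g (M y) (P y))
      (buchdahlPolyTOVDeriv g (M x) (P x) Q x) x := by
  have h1 : 1 - 2 * M x ≠ 0 := fun h => hM1 (by linarith)
  have hs := (hM.const_mul 3).add hP
  refine HasDerivAt.congr_deriv ((((hs.fun_pow 2).const_mul g).sub ((hM.const_mul 18).mul hs) |>.add
    ((hM.fun_pow 2).const_mul 18)).add ((hM.const_mul (9 - 2 * g)).mul (hs.fun_pow 2))) ?_
  unfold buchdahlPolyTOVDeriv buchdahlPoly buchdahlQuadratic buchdahlDensityCoeff
  norm_num only [Pi.add_apply, pow_one]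
  field_simp
  ring

lemma exists_buchdahlPolyTOVDeriv_le_mul {g x : ℝ} {M P Q : ℝ → ℝ} (hx : 0 < x)
    (hMc : ContinuousAt M x) (hPc : ContinuousAt P x) (hM1 : 2 * M x < 1)
    (hD : 0 < buchdahlDensityCoeff g (M x) (P x)) (hQ : ∀ᶠ y in 𝓝 x, Q y ≤ 3 * M y) :
    ∃ K, ∀ᶠ y in 𝓝 x, buchdahlPoly g (M y) (P y) < 0 →
      buchdahlPolyTOVDeriv g (M y) (P y) (Q y) y ≤ K * buchdahlPoly g (M y) (P y) := by
  set c := fun y => (4 - 14 * M y - 2 * P y) / (y * (1 - 2 * M y))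
  have hden : 0 < x * (1 - 2 * M x) := mul_pos hx (by linarith)
  have hcc : ContinuousAt c x := by fun_prop (disch := exact hden.ne')
  have hDc : ContinuousAt (fun y => buchdahlDensityCoeff g (M y) (P y)) x := by
    unfold buchdahlDensityCoeff; fun_prop
  have hdenc : ContinuousAt (fun y => y * (1 - 2 * M y)) x := by fun_prop
  refine ⟨c x - 1, ?_⟩
  filter_upwards [hcc.eventually_const_lt (sub_one_lt (c x)), hDc.eventually_const_lt hD,
    hdenc.eventually_const_lt hden, hQ] with y hcy hDy hdeny hQy hHy
  have hdensity : (Q y - 3 * M y) * buchdahlDensityCoeff g (M y) (P y) / (y * (1 - 2 * M y)) ≤ 0 :=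
    div_nonpos_of_nonpos_of_nonneg (mul_nonpos_of_nonpos_of_nonneg (by linarith) hDy.le) hdeny.le
  calc buchdahlPolyTOVDeriv g (M y) (P y) (Q y) y
      = c y * buchdahlPoly g (M y) (P y)
        + (Q y - 3 * M y) * buchdahlDensityCoeff g (M y) (P y) / (y * (1 - 2 * M y)) := by
        unfold buchdahlPolyTOVDeriv; simp only [c]; ring
    _ ≤ c y * buchdahlPoly g (M y) (P y) := by linarith
    _ ≤ (c x - 1) * buchdahlPoly g (M y) (P y) := by nlinarith

lemma eventually_buchdahlPoly_mul_neg {g a₀ b₀ : ℝ} {a b t : ℝ → ℝ} {l : Filter ℝ}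
    (ha : Tendsto a l (𝓝 a₀)) (hb : Tendsto b l (𝓝 b₀)) (ht : Tendsto t l (𝓝 0))
    (ht0 : ∀ᶠ x in l, t x ≠ 0) (ha₀ : 0 < a₀) (hb₀ : 0 < b₀)
    (hs : √g * (3 * a₀ + b₀) < 6 * a₀) :
    ∀ᶠ x in l, buchdahlPoly g (t x * a x) (t x * b x) < 0 := by
  have hc : Continuous fun q : ℝ × ℝ × ℝ =>
      buchdahlQuadratic g q.2.1 q.2.2 + q.1 * ((9 - 2 * g) * q.2.1 * (3 * q.2.1 + q.2.2) ^ 2) := by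
    unfold buchdahlQuadratic; fun_prop
  have hlim := (hc.tendsto (0, a₀, b₀)).comp (ht.prodMk_nhds (ha.prodMk_nhds hb))
  simp only [zero_mul, add_zero] at hlim
  filter_upwards [hlim.eventually_lt_const (buchdahlQuadratic_neg ha₀ hb₀ hs), ht0] with x hx hx0
  rw [buchdahlPoly_mul_mul]
  exact mul_neg_of_pos_of_neg (by positivity) hx

lemma exists_first_zero {H : ℝ → ℝ} {a b : ℝ} (hab : a ≤ b) (hH : ContinuousOn H (Icc a b))
    (ha : H a < 0) (hb : 0 ≤ H b) : ∃ c ∈ Ioc a b, H c = 0 ∧ ∀ x ∈ Ico a c, H x < 0 := by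
  set S := Icc a b ∩ H ⁻¹' Ici 0
  have hS : IsClosed S := hH.preimage_isClosed_of_isClosed isClosed_Icc isClosed_Ici
  have hSb : BddBelow S := ⟨a, fun x hx => hx.1.1⟩
  obtain ⟨⟨hac, hcb⟩, hc⟩ : sInf S ∈ S := hS.csInf_mem ⟨b, ⟨hab, le_rfl⟩, hb⟩ hSb
  have hbefore : ∀ x ∈ Ico a (sInf S), H x < 0 := fun x hx => by
    by_contra! h
    exact hx.2.not_ge (csInf_le hSb ⟨⟨hx.1, hx.2.le.trans hcb⟩, h⟩)
  have hac' : a < sInf S := hac.lt_of_ne fun h => (h ▸ ha).not_ge hc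
  refine ⟨sInf S, ⟨hac', hcb⟩, le_antisymm ?_ hc, hbefore⟩
  have hleft : ContinuousWithinAt H (Iio (sInf S)) (sInf S) :=
    (hH.continuousWithinAt ⟨hac, hcb⟩).mono_of_mem_nhdsWithin
      (mem_of_superset (Ico_mem_nhdsLT hac') fun x hx => ⟨hx.1, hx.2.le.trans hcb⟩)
  refine le_of_tendsto hleft ?_
  filter_upwards [Ico_mem_nhdsLT hac'] with x hx using (hbefore x hx).le

lemma nonneg_of_deriv_le_mul {H H' : ℝ → ℝ} {a b K : ℝ} (hab : a ≤ b)
    (hH : ContinuousOn H (Icc a b)) (hd : ∀ x ∈ Ioo a b, HasDerivAt H (H' x) x)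
    (hK : ∀ x ∈ Ioo a b, H' x ≤ K * H x) (hb : 0 ≤ H b) : 0 ≤ H a := by
  have hanti : AntitoneOn (fun x => H x * exp (-K * x)) (Icc a b) := by
    refine antitoneOn_of_hasDerivWithinAt_nonpos (f' := fun x => (H' x - K * H x) * exp (-K * x))
      (convex_Icc a b)
      (hH.mul (by fun_prop)) (fun x hx => ?_) fun x hx => ?_
    · rw [interior_Icc] at hx
      refine (((hd x hx).mul ((hasDerivAt_id x).const_mul (-K)).exp).congr_deriv
        ?_).hasDerivWithinAt
      simp only [id_eq, mul_one]
      ring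
    · rw [interior_Icc] at hx
      exact mul_nonpos_of_nonpos_of_nonneg (sub_nonpos.mpr (hK x hx)) (exp_pos _).le
  have := hanti ⟨le_rfl, hab⟩ ⟨hab, le_rfl⟩ hab
  simp only at this
  exact nonneg_of_mul_nonneg_left ((mul_nonneg hb (exp_pos _).le).trans this) (exp_pos _)

lemma lt_zero_of_deriv_le_mul_near_zeros {H H' : ℝ → ℝ} {a b : ℝ}
    (hd : ∀ x ∈ Ioo a b, HasDerivAt H (H' x) x) (ha : ∀ᶠ x in 𝓝[>] a, H x < 0)
    (hzero : ∀ x ∈ Ioo a b, H x = 0 → ∃ K, ∀ᶠ y in 𝓝[<] x, H y < 0 → H' y ≤ K * H y) :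
    ∀ x ∈ Ioo a b, H x < 0 := by
  intro r hr
  by_contra! hr0
  obtain ⟨c, hcH, hac, hcr⟩ := (ha.and (Ioo_mem_nhdsGT hr.1)).exists
  have hcont : ∀ {u v}, a < u → v < b → ContinuousOn H (Icc u v) := fun hu hv x hx =>
    (hd x ⟨hu.trans_le hx.1, hx.2.trans_lt hv⟩).continuousAt.continuousWithinAt
  obtain ⟨r₁, ⟨hcr₁, hr₁r⟩, hr₁, hneg⟩ := exists_first_zero hcr.le (hcont hac hr.2) hcH hr0
  obtain ⟨K, hK⟩ := hzero r₁ ⟨hac.trans hcr₁, hr₁r.trans_lt hr.2⟩ hr₁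
  obtain ⟨l, hl, hlK⟩ := mem_nhdsLT_iff_exists_Ioo_subset.mp hK
  have hmax : max l c ∈ Ico c r₁ := ⟨le_max_right l c, max_lt hl hcr₁⟩
  refine (hneg _ hmax).not_ge (nonneg_of_deriv_le_mul (K := K) hmax.2.le
    (hcont (hac.trans_le hmax.1) (hr₁r.trans_lt hr.2)) (fun x hx => hd x ?_) (fun x hx => ?_)
    hr₁.ge)
  · exact ⟨hac.trans_le (hmax.1.trans hx.1.le), hx.2.trans_le hr₁r |>.trans hr.2⟩
  · exact hlK ⟨(le_max_left l c).trans_lt hx.1, hx.2⟩ (hneg x ⟨hmax.1.trans hx.1.le, hx.2⟩)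

lemma tov_pressure_gradient_eq {ρ m p x : ℝ} (hρ : ρ ≠ 0) (hm : m ≠ 0) (hx : x ≠ 0) :
    -(ρ * m / x ^ 2) * (1 + p / ρ) * (1 + 4 * π * x ^ 3 * p / m) * (1 - 2 * m / x)⁻¹ =
      -((ρ + p) * (m + 4 * π * x ^ 3 * p)) / (x * (x - 2 * m)) := by
  rw [one_sub_div hx, inv_div]
  field_simp

lemma tov_pressure_gradient_neg {ρ m p x : ℝ} (hρ : 0 < ρ) (hm : 0 < m) (hp : 0 < p)
    (hx : 0 < x) (h2m : 2 * m < x) :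
    -(ρ * m / x ^ 2) * (1 + p / ρ) * (1 + 4 * π * x ^ 3 * p / m) * (1 - 2 * m / x)⁻¹ < 0 := by
  rw [tov_pressure_gradient_eq hρ.ne' hm.ne' hx.ne']
  have : 0 < x - 2 * m := by linarith
  exact div_neg_of_neg_of_pos (neg_neg_of_pos (by positivity)) (by positivity)

lemma strictAntiOn_pressure_of_tov {ρ m p : ℝ → ℝ} {R : ℝ} (hρ : ∀ x ∈ Ioo 0 R, 0 < ρ x)
    (hm : ∀ x ∈ Ioo 0 R, 0 < m x) (h2m : ∀ x ∈ Ioo 0 R, 2 * m x < x)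
    (hp : ∀ x ∈ Ioo 0 R, 0 < p x)
    (hTOV : ∀ x ∈ Ioo 0 R, HasDerivAt p (-(ρ x * m x / x ^ 2) * (1 + p x / ρ x) *
        (1 + 4 * π * x ^ 3 * p x / m x) * (1 - 2 * m x / x)⁻¹) x) :
    StrictAntiOn p (Ioo 0 R) := by
  refine strictAntiOn_of_deriv_neg (convex_Ioo 0 R)
    (fun x hx => (hTOV x hx).continuousAt.continuousWithinAt) fun x hx => ?_
  rw [interior_Ioo] at hx
  rw [(hTOV x hx).deriv]
  exact tov_pressure_gradient_neg (hρ x hx) (hm x hx) (hp x hx) hx.1 (h2m x hx)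

lemma le_mean_density_of_density_ge {m ρ : ℝ → ℝ} {x c : ℝ} (hx : 0 < x)
    (hm : ContinuousOn m (Icc 0 x)) (hm0 : m 0 = 0)
    (hd : ∀ y ∈ Ioo 0 x, HasDerivAt m (4 * π * y ^ 2 * ρ y) y) (hρ : ∀ y ∈ Ioo 0 x, c ≤ ρ y) :
    4 * π * x ^ 2 * c ≤ 3 * (m x / x) := by
  have hmono : MonotoneOn (fun y => m y - 4 * π / 3 * c * y ^ 3) (Icc 0 x) := by
    refine monotoneOn_of_hasDerivWithinAt_nonneg
      (f' := fun y => 4 * π * y ^ 2 * ρ y - 4 * π * y ^ 2 * c) (convex_Icc 0 x)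
      (hm.sub (by fun_prop)) (fun y hy => ?_) fun y hy => ?_ <;> rw [interior_Icc] at hy
    · refine (((hd y hy).sub ((hasDerivAt_pow 3 y).const_mul (4 * π / 3 * c))).congr_deriv
        ?_).hasDerivWithinAt
      push_cast
      ring
    · have := hρ y hy
      have : 0 ≤ 4 * π * y ^ 2 := by positivity
      nlinarith
  have := hmono ⟨le_rfl, hx.le⟩ ⟨hx.le, le_rfl⟩ hx.le
  simp only [hm0] at this
  rw [mul_div_assoc', le_div_iff₀ hx]
  nlinarith

lemma density_le_mean_density_of_tov {f m p : ℝ → ℝ} {R : ℝ} (hf : MonotoneOn f (Ici 0))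
    (hp : ∀ x ∈ Ioo 0 R, 0 < p x) (hp_anti : AntitoneOn p (Ioo 0 R))
    (hm_cont : ContinuousOn m (Icc 0 R)) (hm0 : m 0 = 0)
    (hTOV_m : ∀ x ∈ Ioo 0 R, HasDerivAt m (4 * π * x ^ 2 * f (p x)) x) :
    ∀ x ∈ Ioo 0 R, 4 * π * x ^ 2 * f (p x) ≤ 3 * (m x / x) := fun x hx =>
  have hsub : Ioo 0 x ⊆ Ioo 0 R := Ioo_subset_Ioo_right hx.2.le
  le_mean_density_of_density_ge hx.1 (hm_cont.mono (Icc_subset_Icc_right hx.2.le)) hm0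
    (fun y hy => hTOV_m y (hsub hy)) fun y hy =>
      hf (hp x hx).le (hp y (hsub hy)).le (hp_anti (hsub hy) hx hy.2.le)

lemma hasDerivAt_buchdahlPoly_of_tov {g ρ x : ℝ} {m p : ℝ → ℝ} (hρ : ρ ≠ 0) (hm : m x ≠ 0)
    (hx : 0 < x) (h2m : 2 * m x < x) (hdm : HasDerivAt m (4 * π * x ^ 2 * ρ) x)
    (hdp : HasDerivAt p (-(ρ * m x / x ^ 2) * (1 + p x / ρ) *
        (1 + 4 * π * x ^ 3 * p x / m x) * (1 - 2 * m x / x)⁻¹) x) :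
    HasDerivAt (fun y => buchdahlPoly g (m y / y) (4 * π * y ^ 2 * p y))
      (buchdahlPolyTOVDeriv g (m x / x) (4 * π * x ^ 2 * p x) (4 * π * x ^ 2 * ρ) x) x := by
  rw [tov_pressure_gradient_eq hρ hm hx.ne'] at hdp
  have h1 : x - 2 * m x ≠ 0 := by linarith
  refine hasDerivAt_buchdahlPoly_comp hx.ne' (by intro h; field_simp at h; linarith) ?_ ?_
  · refine (hdm.div (hasDerivAt_id x) hx.ne').congr_deriv ?_
    simp only [id_eq]
    field_simp
  · refine (((hasDerivAt_pow 2 x).const_mul (4 * π)).mul hdp).congr_deriv ?_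
    field_simp
    ring

lemma eventually_buchdahlPoly_neg_of_regular {g ρ₀ p₀ : ℝ} {m p : ℝ → ℝ} (hg : 0 < g)
    (hreg : Tendsto (fun r => m r / r ^ 3) (𝓝[>] 0) (𝓝 (4 * π / 3 * ρ₀)))
    (hp : Tendsto p (𝓝[>] 0) (𝓝 p₀)) (hρ₀ : 0 < ρ₀) (hp₀ : 0 < p₀)
    (hσ : p₀ / ρ₀ < 2 / √g - 1) :
    ∀ᶠ r in 𝓝[>] 0, buchdahlPoly g (m r / r) (4 * π * r ^ 2 * p r) < 0 := by
  have hs := sqrt_mul_add_lt_of_div_lt hg hρ₀ (by positivity : (0 : ℝ) < 4 * π) hσ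
  have ht : Tendsto (fun r : ℝ => r ^ 2) (𝓝[>] 0) (𝓝 0) := by
    simpa using ((continuous_pow 2).tendsto (0 : ℝ)).mono_left nhdsWithin_le_nhds
  filter_upwards [eventually_buchdahlPoly_mul_neg (g := g) hreg (hp.const_mul (4 * π)) ht
    (eventually_mem_nhdsWithin.mono fun r hr => pow_ne_zero 2 (ne_of_gt hr)) (by positivity)
    (by positivity) (by linarith), self_mem_nhdsWithin] with r hr hr0
  convert hr using 2
  · field_simp
  · ring

theorem generalized_buchdahl_interior_inequality_general
    (g : ℝ) (hg0 : 0 < g) (hg4 : g < 4)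
    (R : ℝ)
    (f : ℝ → ℝ)
    (hf_mono : MonotoneOn f (Set.Ici 0))
    (hf_pos : ∀ q : ℝ, 0 < q → 0 < f q)
    (m p : ℝ → ℝ)
    (hm_cont : ContinuousOn m (Set.Icc 0 R))
    (hp_cont : ContinuousOn p (Set.Icc 0 R))
    (hm0 : m 0 = 0)
    (hm_pos : ∀ r ∈ Set.Ioo 0 R, 0 < m r)
    (h2m : ∀ r ∈ Set.Ioo 0 R, 2 * m r < r)
    (hp_pos : ∀ r ∈ Set.Ico 0 R, 0 < p r)
    (hTOV_m : ∀ r ∈ Set.Ioo 0 R,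
      HasDerivAt m (4 * Real.pi * r ^ 2 * f (p r)) r)
    (hTOV_p : ∀ r ∈ Set.Ioo 0 R,
      HasDerivAt p (-(f (p r) * m r / r ^ 2) * (1 + p r / f (p r)) *
        (1 + 4 * Real.pi * r ^ 3 * p r / m r) * (1 - 2 * m r / r)⁻¹) r)
    (hreg : Filter.Tendsto (fun r => m r / r ^ 3) (nhdsWithin 0 (Set.Ioi 0))
      (nhds (4 * Real.pi / 3 * f (p 0))))
    (hsigma : ∀ r ∈ Set.Ico 0 R, p r / f (p r) < 2 / Real.sqrt g - 1) :
    ∀ r ∈ Set.Ioo 0 R,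
      g ≤ 9 * (m r / r) *
            (2 * (2 * (m r / r) + 4 * Real.pi * r ^ 2 * p r)
              - (3 * (m r / r) + 4 * Real.pi * r ^ 2 * p r) ^ 2) /
          ((1 - 2 * (m r / r)) * (3 * (m r / r) + 4 * Real.pi * r ^ 2 * p r) ^ 2) := by
  intro r hr
  have hR : 0 < R := hr.1.trans hr.2
  have hp : ∀ x ∈ Ioo 0 R, 0 < p x := fun x hx => hp_pos x (Ioo_subset_Ico_self hx)
  have hρ : ∀ x ∈ Ioo 0 R, 0 < f (p x) := fun x hx => hf_pos _ (hp x hx)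
  have hM : ∀ x ∈ Ioo 0 R, 0 < m x / x ∧ 2 * (m x / x) < 1 ∧ 0 < 4 * π * x ^ 2 * p x :=
    fun x hx => ⟨div_pos (hm_pos x hx) hx.1,
      by rw [mul_div_assoc', div_lt_one hx.1]; exact h2m x hx,
      by have := hp x hx; have := hx.1; positivity⟩
  have hQ := density_le_mean_density_of_tov hf_mono hp
    (strictAntiOn_pressure_of_tov (ρ := fun x => f (p x)) hρ hm_pos h2m hp hTOV_p).antitoneOn
    hm_cont hm0 hTOV_m
  have hcentre := eventually_buchdahlPoly_neg_of_regular hg0 hreg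
    ((hp_cont 0 ⟨le_rfl, hR.le⟩).mono_of_mem_nhdsWithin (Icc_mem_nhdsGT hR))
    (hf_pos _ (hp_pos 0 ⟨le_rfl, hR⟩)) (hp_pos 0 ⟨le_rfl, hR⟩) (hsigma 0 ⟨le_rfl, hR⟩)
  have hs : ∀ x ∈ Ioo 0 R, √g * (3 * (m x / x) + 4 * π * x ^ 2 * p x) < 6 * (m x / x) :=
    fun x hx => sqrt_mul_lt_of_le_three_mul hg4 (hQ x hx) (sqrt_mul_add_lt_of_div_lt hg0 (hρ x hx)
      (by have := hx.1; positivity) (hsigma x (Ioo_subset_Ico_self hx)))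
  have hneg := lt_zero_of_deriv_le_mul_near_zeros
    (fun x hx => hasDerivAt_buchdahlPoly_of_tov (hρ x hx).ne' (hm_pos x hx).ne' hx.1 (h2m x hx)
      (hTOV_m x hx) (hTOV_p x hx)) hcentre
    (fun x hx hx0 => (exists_buchdahlPolyTOVDeriv_le_mul hx.1
      ((hTOV_m x hx).continuousAt.div continuousAt_id hx.1.ne')
      (by have := (hTOV_p x hx).continuousAt; fun_prop) (hM x hx).2.1
      (buchdahlDensityCoeff_pos (hM x hx).1 (hM x hx).2.1 (hM x hx).2.2 (hs x hx) hx0)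
      (eventually_of_mem (Ioo_mem_nhds hx.1 hx.2) hQ)).imp
        fun _ hK => hK.filter_mono nhdsWithin_le_nhds) r hr
  exact le_buchdahlPhi_of_buchdahlPoly_nonpos (hM r hr).1 (hM r hr).2.1 (hM r hr).2.2.le hneg.le

/-- **Generalized Buchdahl interior inequality.**
Let `g ∈ (0,4)`. For every regular perfect fluid solution (units `G = c = 1`) with a
non-decreasing equation of state `ρ = f(p)` whose pressure–density ratio satisfies
`p(r)/f(p(r)) < 2/√g − 1` for all `r ∈ [0,R)`, the inequality
`Φ(m(r)/r, 4π r² p(r)) ≥ g` holds for all `r ∈ (0,R)`, where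
`Φ(M,P) = 9M[2(2M+P) − (3M+P)²] / ((1−2M)(3M+P)²)`. -/
theorem generalized_buchdahl_interior_inequality
    (g : ℝ) (hg0 : 0 < g) (hg4 : g < 4)
    (R : ℝ) (hR : 0 < R)
    (f : ℝ → ℝ)
    (hf_nonneg : ∀ q : ℝ, 0 ≤ q → 0 ≤ f q)
    (hf_mono : MonotoneOn f (Set.Ici 0))
    (hf_cont : ContinuousOn f (Set.Ici 0))
    (hf_pos : ∀ q : ℝ, 0 < q → 0 < f q)
    (m p : ℝ → ℝ)
    (hm_cont : ContinuousOn m (Set.Icc 0 R))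
    (hp_cont : ContinuousOn p (Set.Icc 0 R))
    (hm0 : m 0 = 0)
    (hm_pos : ∀ r ∈ Set.Ioo 0 R, 0 < m r)
    (h2m : ∀ r ∈ Set.Ioo 0 R, 2 * m r < r)
    (hp_pos : ∀ r ∈ Set.Ico 0 R, 0 < p r)
    (hpR : p R = 0)
    (hTOV_m : ∀ r ∈ Set.Ioo 0 R,
      HasDerivAt m (4 * Real.pi * r ^ 2 * f (p r)) r)
    (hTOV_p : ∀ r ∈ Set.Ioo 0 R,
      HasDerivAt p (-(f (p r) * m r / r ^ 2) * (1 + p r / f (p r)) *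
        (1 + 4 * Real.pi * r ^ 3 * p r / m r) * (1 - 2 * m r / r)⁻¹) r)
    (hreg : Filter.Tendsto (fun r => m r / r ^ 3) (nhdsWithin 0 (Set.Ioi 0))
      (nhds (4 * Real.pi / 3 * f (p 0))))
    (hsigma : ∀ r ∈ Set.Ico 0 R, p r / f (p r) < 2 / Real.sqrt g - 1) :
    ∀ r ∈ Set.Ioo 0 R,
      g ≤ 9 * (m r / r) *
            (2 * (2 * (m r / r) + 4 * Real.pi * r ^ 2 * p r)
              - (3 * (m r / r) + 4 * Real.pi * r ^ 2 * p r) ^ 2) /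
          ((1 - 2 * (m r / r)) * (3 * (m r / r) + 4 * Real.pi * r ^ 2 * p r) ^ 2) :=
  generalized_buchdahl_interior_inequality_general g hg0 hg4 R f hf_mono hf_pos m p hm_cont hp_cont
    hm0 hm_pos h2m hp_pos hTOV_m hTOV_p hreg hsigma
end

section
/- Every regular perfect fluid solution with non-decreasing equation of state obeys the Buchdahl surface inequality 2M/R ≤ 8/9, where M = m(R) is the total mass and R the surface radius. -/
/-!
Buchdahl's argument. TOV makes the pressure, hence the density `ρ = f(p)`, non-increasing in `r`,
so `ρ(r)` is at most the mean density `3m/(4πr³)` and `m/r³` is non-increasing. Along the lapse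
`ζ = e^{ν/2}` the quantity `Γ = ζ' √(1 - 2m/r) / r` satisfies `Γ' = ζ (m/r³)' / √(1 - 2m/r) ≤ 0`.
Fix `s < R` and `K = m(s)/s³`. For `t ≤ s` we have `1 - 2m(t)/t ≤ 1 - 2Kt²` and `Γ(t) ≥ Γ(s)`, so
`ζ'(t) ≥ Γ(s) t / √(1 - 2Kt²)`; integrating over `(0, s)` and using `ζ > 0` gives
`Γ(s) (1 - y) / (2K) ≤ ζ(s)` with `y = √(1 - 2m(s)/s)`, while `Γ(s) ≥ ζ(s) K / y` since `p(s) ≥ 0`.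
Hence `(1 - y) / (2y) ≤ 1`, i.e. `y ≥ 1/3`, which is `2m(s)/s ≤ 8/9`; let `s → R`.
-/

open Set Real

lemma monotoneOn_of_hasDerivAt_nonneg {D : Set ℝ} (hD : Convex ℝ D) {f f' : ℝ → ℝ}
    (hf : ContinuousOn f D) (hf' : ∀ x ∈ interior D, HasDerivAt f (f' x) x)
    (hf'₀ : ∀ x ∈ interior D, 0 ≤ f' x) : MonotoneOn f D :=
  monotoneOn_of_hasDerivWithinAt_nonneg hD hf (fun x hx ↦ (hf' x hx).hasDerivWithinAt) hf'₀

lemma antitoneOn_of_hasDerivAt_nonpos {D : Set ℝ} (hD : Convex ℝ D) {f f' : ℝ → ℝ}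
    (hf : ContinuousOn f D) (hf' : ∀ x ∈ interior D, HasDerivAt f (f' x) x)
    (hf'₀ : ∀ x ∈ interior D, f' x ≤ 0) : AntitoneOn f D :=
  antitoneOn_of_hasDerivWithinAt_nonpos hD hf (fun x hx ↦ (hf' x hx).hasDerivWithinAt) hf'₀

lemma exists_pos_hasDerivAt_eq_mul {φ : ℝ → ℝ} {a b : ℝ} (hab : a < b)
    (hφ : ContinuousOn φ (Ioo a b)) :
    ∃ ζ : ℝ → ℝ, ∀ t ∈ Ioo a b, 0 < ζ t ∧ HasDerivAt ζ (ζ t * φ t) t := by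
  obtain ⟨c, hc⟩ := nonempty_Ioo.2 hab
  refine ⟨fun t ↦ exp (∫ x in c..t, φ x), fun t ht ↦ ⟨exp_pos _, ?_⟩⟩
  exact (intervalIntegral.integral_hasDerivAt_right
    ((hφ.mono (ordConnected_Ioo.uIcc_subset hc ht)).intervalIntegrable)
    ((hφ.stronglyMeasurableAtFilter isOpen_Ioo) t ht)
    (hφ.continuousAt (isOpen_Ioo.mem_nhds ht))).exp

lemma sub_le_of_hasDerivAt_le {ζ ζ' g g' : ℝ → ℝ} {s : ℝ} (hs : 0 < s)
    (hζ₀ : ∀ t ∈ Ioo 0 s, 0 ≤ ζ t) (hζ : ∀ t ∈ Ioc 0 s, HasDerivAt ζ (ζ' t) t)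
    (hg : ContinuousOn g (Icc 0 s)) (hg' : ∀ t ∈ Ioo 0 s, HasDerivAt g (g' t) t)
    (hle : ∀ t ∈ Ioo 0 s, g' t ≤ ζ' t) : g s - g 0 ≤ ζ s := by
  have hmono : MonotoneOn (fun t ↦ ζ t - g t) (Ioc 0 s) := by
    refine monotoneOn_of_hasDerivAt_nonneg (f' := fun t ↦ ζ' t - g' t) (convex_Ioc 0 s)
      (fun t ht ↦ ((hζ t ht).continuousAt.continuousWithinAt).sub
        (hg.mono Ioc_subset_Icc_self t ht)) (fun t ht ↦ ?_) (fun t ht ↦ ?_)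
    · rw [interior_Ioc] at ht
      exact (hζ t (Ioo_subset_Ioc_self ht)).sub (hg' t ht)
    · rw [interior_Ioc] at ht
      exact sub_nonneg.2 (hle t ht)
  have hs_mem : s ∈ Ioc 0 s := ⟨hs, le_rfl⟩
  refine ContinuousWithinAt.closure_le (f := fun t ↦ g s - g t) (s := Ioo 0 s)
    (by simp [closure_Ioo hs.ne, hs.le])
    (continuousWithinAt_const.sub ((hg 0 ⟨le_rfl, hs.le⟩).mono Ioo_subset_Icc_self))
    continuousWithinAt_const fun t ht ↦ ?_
  have := hmono (Ioo_subset_Ioc_self ht) hs_mem ht.2.le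
  linarith [hζ₀ t ht]

lemma mul_one_sub_sqrt_le_of_hasDerivAt {ζ ζ' : ℝ → ℝ} {c K s : ℝ} (hs : 0 < s) (hK : 0 < K)
    (hKs : 2 * K * s ^ 2 < 1) (hζ₀ : ∀ t ∈ Ioo 0 s, 0 ≤ ζ t)
    (hζ : ∀ t ∈ Ioc 0 s, HasDerivAt ζ (ζ' t) t)
    (hle : ∀ t ∈ Ioo 0 s, c * t / √(1 - 2 * K * t ^ 2) ≤ ζ' t) :
    c / (2 * K) * (1 - √(1 - 2 * K * s ^ 2)) ≤ ζ s := by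
  have hg : ∀ t ∈ Ioo 0 s, HasDerivAt (fun t ↦ -(c / (2 * K)) * √(1 - 2 * K * t ^ 2))
      (c * t / √(1 - 2 * K * t ^ 2)) t := by
    intro t ht
    have : 0 < 1 - 2 * K * t ^ 2 := by
      have := ht.1
      nlinarith [mul_lt_mul_of_pos_left (pow_lt_pow_left₀ ht.2 ht.1.le two_ne_zero) hK]
    refine ((((hasDerivAt_pow 2 t).const_mul (2 * K)).const_sub 1).sqrt this.ne').const_mul _
      |>.congr_deriv ?_
    field_simp
    ring
  have := sub_le_of_hasDerivAt_le hs hζ₀ hζ (by fun_prop) hg hle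
  simp only [ne_eq, OfNat.ofNat_ne_zero, not_false_eq_true, zero_pow, mul_zero, sub_zero,
    Real.sqrt_one] at this
  linarith

lemma volume_mul_density_le_mass {m ρ : ℝ → ℝ} {r : ℝ} (hr : 0 < r)
    (hm : ContinuousOn m (Icc 0 r)) (hm0 : m 0 = 0)
    (hm' : ∀ x ∈ Ioo 0 r, HasDerivAt m (4 * π * x ^ 2 * ρ x) x)
    (hρ : ∀ x ∈ Ioo 0 r, ρ r ≤ ρ x) :
    4 / 3 * π * r ^ 3 * ρ r ≤ m r := by
  have hmono : MonotoneOn (fun x ↦ m x - 4 / 3 * π * x ^ 3 * ρ r) (Icc 0 r) := by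
    refine monotoneOn_of_hasDerivAt_nonneg (convex_Icc 0 r) (by fun_prop) (fun x hx ↦ ?_)
      (fun x hx ↦ ?_) (f' := fun x ↦ 4 * π * x ^ 2 * (ρ x - ρ r))
    · rw [interior_Icc] at hx
      exact ((hm' x hx).sub (((hasDerivAt_pow 3 x).const_mul _).mul_const _)).congr_deriv
        (by ring)
    · rw [interior_Icc] at hx
      have := hρ x hx
      have : 0 ≤ ρ x - ρ r := by linarith
      positivity
  simpa [hm0] using hmono ⟨le_rfl, hr.le⟩ ⟨hr.le, le_rfl⟩ hr.le

lemma hasDerivAt_div_cube {m : ℝ → ℝ} {ρ t : ℝ} (ht : t ≠ 0)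
    (hm : HasDerivAt m (4 * π * t ^ 2 * ρ) t) :
    HasDerivAt (fun r ↦ m r / r ^ 3) ((4 * π * t ^ 3 * ρ - 3 * m t) / t ^ 4) t := by
  refine (hm.div (hasDerivAt_pow 3 t) (pow_ne_zero 3 ht)).congr_deriv ?_
  field_simp
  ring

lemma div_cube_deriv_nonpos {M ρ x : ℝ} (h : 4 / 3 * π * x ^ 3 * ρ ≤ M) :
    (4 * π * x ^ 3 * ρ - 3 * M) / x ^ 4 ≤ 0 :=
  div_nonpos_of_nonpos_of_nonneg (by linarith) (by positivity)

lemma antitoneOn_div_cube {m ρ : ℝ → ℝ} {R : ℝ}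
    (hm' : ∀ x ∈ Ioo 0 R, HasDerivAt m (4 * π * x ^ 2 * ρ x) x)
    (hmean : ∀ x ∈ Ioo 0 R, 4 / 3 * π * x ^ 3 * ρ x ≤ m x) :
    AntitoneOn (fun x ↦ m x / x ^ 3) (Ioo 0 R) := by
  have hd := fun x (hx : x ∈ Ioo 0 R) ↦ hasDerivAt_div_cube hx.1.ne' (hm' x hx)
  refine antitoneOn_of_hasDerivAt_nonpos (f' := fun x ↦ (4 * π * x ^ 3 * ρ x - 3 * m x) / x ^ 4)
    (convex_Ioo 0 R) (fun x hx ↦ (hd x hx).continuousAt.continuousWithinAt) (fun x hx ↦ ?_)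
    (fun x hx ↦ ?_)
  · rw [interior_Ioo] at hx; exact hd x hx
  · rw [interior_Ioo] at hx
    exact div_cube_deriv_nonpos (hmean x hx)

lemma one_sub_two_mul_div_pos {M r : ℝ} (hr : 0 < r) (hMr : 2 * M < r) : 0 < 1 - 2 * M / r := by
  rw [sub_pos, div_lt_one hr]
  exact hMr

/-- `ν'/2` for the interior metric `-e^ν dt² + (1 - 2m/r)⁻¹ dr² + r² dΩ²`, so that the lapse
`ζ = e^{ν/2}` satisfies `ζ' = ζ · lapseLogDeriv m p r` and TOV reads `p' = -(ρ + p) · ν'/2`. -/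
noncomputable def lapseLogDeriv (M P r : ℝ) : ℝ :=
  (M + 4 * π * r ^ 3 * P) / (r ^ 2 * (1 - 2 * M / r))

lemma tov_eq_neg_mul_lapseLogDeriv {ρ P M r : ℝ} (hρ : ρ ≠ 0) (hM : M ≠ 0) (hr : r ≠ 0) :
    -(ρ * M / r ^ 2) * (1 + P / ρ) * (1 + 4 * π * r ^ 3 * P / M) * (1 - 2 * M / r)⁻¹ =
      -(ρ + P) * lapseLogDeriv M P r := by
  rw [lapseLogDeriv, div_eq_mul_inv _ (r ^ 2 * _), mul_inv]
  field_simp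

lemma lapseLogDeriv_pos {M P r : ℝ} (hM : 0 < M) (hP : 0 ≤ P) (hMr : 2 * M < r) :
    0 < lapseLogDeriv M P r := by
  have hr : 0 < r := by linarith
  have := one_sub_two_mul_div_pos hr hMr
  unfold lapseLogDeriv
  positivity

lemma continuousOn_lapseLogDeriv {m p : ℝ → ℝ} {s : Set ℝ} (hm : ContinuousOn m s)
    (hp : ContinuousOn p s) (hs : ∀ r ∈ s, 0 < r ∧ 2 * m r < r) :
    ContinuousOn (fun r ↦ lapseLogDeriv (m r) (p r) r) s := by
  refine ContinuousOn.div (by fun_prop) ?_ fun r hr ↦ ?_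
  · exact continuousOn_id.pow 2 |>.mul <| continuousOn_const.sub <|
      (continuousOn_const.mul hm).div continuousOn_id fun r hr ↦ (hs r hr).1.ne'
  · have := (hs r hr).1
    have := one_sub_two_mul_div_pos this (hs r hr).2
    positivity

lemma antitoneOn_of_hasDerivAt_neg_mul_lapseLogDeriv {m p ρ : ℝ → ℝ} {R : ℝ}
    (hp : ContinuousOn p (Icc 0 R)) (hm : ∀ r ∈ Ioo 0 R, 0 < m r ∧ 2 * m r < r)
    (hρ : ∀ r ∈ Ioo 0 R, 0 < ρ r ∧ 0 < p r)
    (hp' : ∀ r ∈ Ioo 0 R, HasDerivAt p (-(ρ r + p r) * lapseLogDeriv (m r) (p r) r) r) :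
    AntitoneOn p (Icc 0 R) := by
  refine antitoneOn_of_hasDerivAt_nonpos (convex_Icc 0 R) hp (by simpa using hp') fun r hr ↦ ?_
  rw [interior_Icc] at hr
  obtain ⟨hρr, hpr⟩ := hρ r hr
  exact mul_nonpos_of_nonpos_of_nonneg (by linarith)
    (lapseLogDeriv_pos (hm r hr).1 hpr.le (hm r hr).2).le

/-- Buchdahl's `ζ' √(1 - 2m/r) / r`, with `ζ'` written as `ζ · lapseLogDeriv`. -/
noncomputable def buchdahlGamma (ζ m p : ℝ → ℝ) (r : ℝ) : ℝ :=
  ζ r * lapseLogDeriv (m r) (p r) r * √(1 - 2 * m r / r) / r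

lemma hasDerivAt_buchdahlGamma {ζ m p : ℝ → ℝ} {ρ t : ℝ} (ht : 0 < t) (hmt : 2 * m t < t)
    (hm : HasDerivAt m (4 * π * t ^ 2 * ρ) t)
    (hp : HasDerivAt p (-(ρ + p t) * lapseLogDeriv (m t) (p t) t) t)
    (hζ : HasDerivAt ζ (ζ t * lapseLogDeriv (m t) (p t) t) t) :
    HasDerivAt (buchdahlGamma ζ m p)
      (ζ t / √(1 - 2 * m t / t) * ((4 * π * t ^ 3 * ρ - 3 * m t) / t ^ 4)) t := by
  have hw := one_sub_two_mul_div_pos ht hmt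
  have hw' := ((hm.const_mul 2).div (hasDerivAt_id t) ht.ne').const_sub 1
  have hφ := (hm.add (((hasDerivAt_pow 3 t).const_mul (4 * π)).mul hp)).div
    ((hasDerivAt_pow 2 t).mul hw') (mul_ne_zero (by positivity) hw.ne')
  have hΓ := ((hζ.mul hφ).mul (hw'.sqrt hw.ne')).div (hasDerivAt_id t) ht.ne'
  refine hΓ.congr_deriv ?_
  have hy := Real.sq_sqrt hw.le
  have hy0 := Real.sqrt_pos.2 hw
  set y := √(1 - 2 * m t / t)
  simp only [lapseLogDeriv, Pi.mul_apply, Pi.div_apply, Pi.add_apply, id, ← hy,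
    Real.sqrt_sq hy0.le]
  field_simp
  ring

lemma antitoneOn_buchdahlGamma {ζ m p ρ : ℝ → ℝ} {R : ℝ}
    (hm : ∀ x ∈ Ioo 0 R, 2 * m x < x)
    (hm' : ∀ x ∈ Ioo 0 R, HasDerivAt m (4 * π * x ^ 2 * ρ x) x)
    (hp' : ∀ x ∈ Ioo 0 R, HasDerivAt p (-(ρ x + p x) * lapseLogDeriv (m x) (p x) x) x)
    (hζ : ∀ x ∈ Ioo 0 R, 0 < ζ x ∧ HasDerivAt ζ (ζ x * lapseLogDeriv (m x) (p x) x) x)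
    (hmean : ∀ x ∈ Ioo 0 R, 4 / 3 * π * x ^ 3 * ρ x ≤ m x) :
    AntitoneOn (buchdahlGamma ζ m p) (Ioo 0 R) := by
  have hd := fun x (hx : x ∈ Ioo 0 R) ↦
    hasDerivAt_buchdahlGamma hx.1 (hm x hx) (hm' x hx) (hp' x hx) (hζ x hx).2
  refine antitoneOn_of_hasDerivAt_nonpos (convex_Ioo 0 R)
    (fun x hx ↦ (hd x hx).continuousAt.continuousWithinAt) (fun x hx ↦ ?_) (fun x hx ↦ ?_)
    (f' := fun x ↦ ζ x / √(1 - 2 * m x / x) * ((4 * π * x ^ 3 * ρ x - 3 * m x) / x ^ 4))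
  · rw [interior_Ioo] at hx; exact hd x hx
  · rw [interior_Ioo] at hx
    have := (hζ x hx).1
    exact mul_nonpos_of_nonneg_of_nonpos (by positivity) (div_cube_deriv_nonpos (hmean x hx))

lemma buchdahlGamma_mul_div_sqrt {ζ m p : ℝ → ℝ} {t : ℝ} (ht : 0 < t) (hmt : 2 * m t < t) :
    buchdahlGamma ζ m p t * t / √(1 - 2 * m t / t) = ζ t * lapseLogDeriv (m t) (p t) t := by
  have hy := Real.sqrt_pos.2 (one_sub_two_mul_div_pos ht hmt)
  rw [buchdahlGamma, div_mul_cancel₀ _ ht.ne', mul_div_cancel_right₀ _ hy.ne']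

lemma div_sqrt_le_buchdahlGamma {ζ m p : ℝ → ℝ} {s : ℝ} (hs : 0 < s) (hms : 2 * m s < s)
    (hζ : 0 ≤ ζ s) (hp : 0 ≤ p s) :
    ζ s * (m s / s ^ 3) / √(1 - 2 * m s / s) ≤ buchdahlGamma ζ m p s := by
  have hw := one_sub_two_mul_div_pos hs hms
  have hy := Real.sqrt_pos.2 hw
  calc ζ s * (m s / s ^ 3) / √(1 - 2 * m s / s)
      = ζ s * (m s / (s ^ 2 * (1 - 2 * m s / s))) * √(1 - 2 * m s / s) / s := by
        nth_rw 2 [← Real.sq_sqrt hw.le]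
        field_simp
    _ ≤ buchdahlGamma ζ m p s := by
        rw [buchdahlGamma, lapseLogDeriv]
        gcongr
        linarith [show 0 ≤ 4 * π * s ^ 3 * p s by positivity]

lemma one_third_le_of_div_le_of_mul_one_sub_le {z K y c : ℝ} (hz : 0 < z) (hK : 0 < K)
    (hy : 0 < y) (hc : z * K / y ≤ c) (h : c / (2 * K) * (1 - y) ≤ z) : 1 / 3 ≤ y := by
  by_contra! hy3
  have : z * K / y / (2 * K) * (1 - y) ≤ c / (2 * K) * (1 - y) := by
    gcongr
    linarith
  have : z * K / y / (2 * K) * (1 - y) = z * (1 - y) / (2 * y) := by field_simp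
  have : z * (1 - y) / (2 * y) ≤ z := by linarith
  rw [div_le_iff₀ (by positivity)] at this
  nlinarith

lemma two_mul_div_le_of_antitoneOn_buchdahlGamma {ζ m p : ℝ → ℝ} {s : ℝ} (hs : 0 < s)
    (hms : 0 < m s) (hps : 0 ≤ p s) (hm : ∀ t ∈ Ioc 0 s, 2 * m t < t)
    (hζ : ∀ t ∈ Ioc 0 s, 0 < ζ t ∧ HasDerivAt ζ (ζ t * lapseLogDeriv (m t) (p t) t) t)
    (hK : AntitoneOn (fun t ↦ m t / t ^ 3) (Ioc 0 s))
    (hΓ : AntitoneOn (buchdahlGamma ζ m p) (Ioc 0 s)) :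
    2 * m s / s ≤ 8 / 9 := by
  have hs' : s ∈ Ioc 0 s := ⟨hs, le_rfl⟩
  set K := m s / s ^ 3 with hK_def
  have hK0 : 0 < K := by positivity
  have hKt : ∀ t ∈ Ioc 0 s, 2 * K * t ^ 2 ≤ 2 * m t / t := fun t ht ↦ by
    have := ht.1
    calc 2 * K * t ^ 2 ≤ 2 * (m t / t ^ 3) * t ^ 2 := by gcongr; exact hK ht hs' ht.2
      _ = 2 * m t / t := by field_simp
  have hKs : 2 * K * s ^ 2 = 2 * m s / s := by rw [hK_def]; field_simp
  have hΓs := div_sqrt_le_buchdahlGamma hs (hm s hs') (hζ s hs').1.le hps (p := p)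
  have hint : buchdahlGamma ζ m p s / (2 * K) * (1 - √(1 - 2 * m s / s)) ≤ ζ s := by
    refine hKs ▸ mul_one_sub_sqrt_le_of_hasDerivAt hs hK0 ?_
      (fun t ht ↦ (hζ t (Ioo_subset_Ioc_self ht)).1.le) (fun t ht ↦ (hζ t ht).2) fun t ht ↦ ?_
    · linarith [one_sub_two_mul_div_pos hs (hm s hs')]
    have ht' := Ioo_subset_Ioc_self ht
    have hw := one_sub_two_mul_div_pos ht.1 (hm t ht')
    have := ht.1
    have := (hζ s hs').1
    rw [← buchdahlGamma_mul_div_sqrt ht.1 (hm t ht')]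
    have : 0 ≤ buchdahlGamma ζ m p s := hΓs.trans' (by positivity)
    calc buchdahlGamma ζ m p s * t / √(1 - 2 * K * t ^ 2)
        ≤ buchdahlGamma ζ m p s * t / √(1 - 2 * m t / t) := by
          gcongr
          linarith [hKt t ht']
      _ ≤ buchdahlGamma ζ m p t * t / √(1 - 2 * m t / t) := by
          gcongr
          exact hΓ ht' hs' ht.2.le
  have hζs := (hζ s hs').1
  have hws := one_sub_two_mul_div_pos hs (hm s hs')
  set y := √(1 - 2 * m s / s)
  have hy0 : 0 < y := Real.sqrt_pos.2 hws
  have hy2 : y ^ 2 = 1 - 2 * m s / s := Real.sq_sqrt hws.le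
  nlinarith [one_third_le_of_div_le_of_mul_one_sub_le hζs hK0 hy0 hΓs hint]

theorem buchdahl_surface_inequality_general
    (R : ℝ) (hR : 0 < R)
    (f : ℝ → ℝ)
    (hf_mono : MonotoneOn f (Set.Ici 0))
    (hf_pos : ∀ q : ℝ, 0 < q → 0 < f q)
    (m p : ℝ → ℝ)
    (hm_cont : ContinuousOn m (Set.Icc 0 R))
    (hp_cont : ContinuousOn p (Set.Icc 0 R))
    (hm0 : m 0 = 0)
    (hm_pos : ∀ r ∈ Set.Ioo 0 R, 0 < m r)
    (h2m : ∀ r ∈ Set.Ioo 0 R, 2 * m r < r)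
    (hp_pos : ∀ r ∈ Set.Ico 0 R, 0 < p r)
    (hpR : p R = 0)
    (hTOV_m : ∀ r ∈ Set.Ioo 0 R,
      HasDerivAt m (4 * Real.pi * r ^ 2 * f (p r)) r)
    (hTOV_p : ∀ r ∈ Set.Ioo 0 R,
      HasDerivAt p (-(f (p r) * m r / r ^ 2) * (1 + p r / f (p r)) *
        (1 + 4 * Real.pi * r ^ 3 * p r / m r) * (1 - 2 * m r / r)⁻¹) r) :
    2 * m R / R ≤ 8 / 9 := by
  have hρ : ∀ r ∈ Ioo 0 R, 0 < f (p r) ∧ 0 < p r := fun r hr ↦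
    have := hp_pos r (Ioo_subset_Ico_self hr); ⟨hf_pos _ this, this⟩
  have hm : ∀ r ∈ Ioo 0 R, 0 < m r ∧ 2 * m r < r := fun r hr ↦ ⟨hm_pos r hr, h2m r hr⟩
  have hp' : ∀ r ∈ Ioo 0 R, HasDerivAt p (-(f (p r) + p r) * lapseLogDeriv (m r) (p r) r) r :=
    fun r hr ↦ tov_eq_neg_mul_lapseLogDeriv (hρ r hr).1.ne' (hm r hr).1.ne' hr.1.ne' ▸ hTOV_p r hr
  have hp_anti := antitoneOn_of_hasDerivAt_neg_mul_lapseLogDeriv hp_cont hm hρ hp'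
  have hp_nonneg : ∀ r ∈ Icc 0 R, 0 ≤ p r := fun r hr ↦ hpR ▸ hp_anti hr ⟨hR.le, le_rfl⟩ hr.2
  have hmean : ∀ r ∈ Ioo 0 R, 4 / 3 * π * r ^ 3 * f (p r) ≤ m r := fun r hr ↦
    volume_mul_density_le_mass hr.1 (hm_cont.mono (Icc_subset_Icc_right hr.2.le)) hm0
      (fun x hx ↦ hTOV_m x ⟨hx.1, hx.2.trans hr.2⟩) fun x hx ↦
      have hx' : x ∈ Icc 0 R := ⟨hx.1.le, hx.2.le.trans hr.2.le⟩
      hf_mono (hp_nonneg r (Ioo_subset_Icc_self hr)) (hp_nonneg x hx')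
        (hp_anti hx' (Ioo_subset_Icc_self hr) hx.2.le)
  obtain ⟨ζ, hζ⟩ := exists_pos_hasDerivAt_eq_mul hR <| continuousOn_lapseLogDeriv
    (hm_cont.mono Ioo_subset_Icc_self) (hp_cont.mono Ioo_subset_Icc_self)
    fun r hr ↦ ⟨hr.1, h2m r hr⟩
  have hK := antitoneOn_div_cube hTOV_m hmean
  have hΓ := antitoneOn_buchdahlGamma h2m hTOV_m hp' hζ hmean
  refine ContinuousWithinAt.closure_le (s := Ioo 0 R) (by simp [closure_Ioo hR.ne, hR.le])
    ((((hm_cont R ⟨hR.le, le_rfl⟩).mono Ioo_subset_Icc_self).const_mul 2).div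
      continuousWithinAt_id hR.ne') continuousWithinAt_const fun s hs ↦ ?_
  have hsub : Ioc 0 s ⊆ Ioo 0 R := fun t ht ↦ ⟨ht.1, ht.2.trans_lt hs.2⟩
  exact two_mul_div_le_of_antitoneOn_buchdahlGamma hs.1 (hm_pos s hs)
    (hp_nonneg s (Ioo_subset_Icc_self hs)) (fun t ht ↦ h2m t (hsub ht))
    (fun t ht ↦ hζ t (hsub ht)) (hK.mono hsub) (hΓ.mono hsub)

/-- **Buchdahl surface inequality.**
Every regular perfect fluid solution (units `G = c = 1`) with a non-decreasing equation of
state `ρ = f(p)` obeys `2M/R ≤ 8/9`, where `M = m(R)` and `R` is the surface radius. -/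
theorem buchdahl_surface_inequality
    (R : ℝ) (hR : 0 < R)
    (f : ℝ → ℝ)
    (hf_nonneg : ∀ q : ℝ, 0 ≤ q → 0 ≤ f q)
    (hf_mono : MonotoneOn f (Set.Ici 0))
    (hf_cont : ContinuousOn f (Set.Ici 0))
    (hf_pos : ∀ q : ℝ, 0 < q → 0 < f q)
    (m p : ℝ → ℝ)
    (hm_cont : ContinuousOn m (Set.Icc 0 R))
    (hp_cont : ContinuousOn p (Set.Icc 0 R))
    (hm0 : m 0 = 0)
    (hm_pos : ∀ r ∈ Set.Ioo 0 R, 0 < m r)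
    (h2m : ∀ r ∈ Set.Ioo 0 R, 2 * m r < r)
    (hp_pos : ∀ r ∈ Set.Ico 0 R, 0 < p r)
    (hpR : p R = 0)
    (hTOV_m : ∀ r ∈ Set.Ioo 0 R,
      HasDerivAt m (4 * Real.pi * r ^ 2 * f (p r)) r)
    (hTOV_p : ∀ r ∈ Set.Ioo 0 R,
      HasDerivAt p (-(f (p r) * m r / r ^ 2) * (1 + p r / f (p r)) *
        (1 + 4 * Real.pi * r ^ 3 * p r / m r) * (1 - 2 * m r / r)⁻¹) r)
    (hreg : Filter.Tendsto (fun r => m r / r ^ 3) (nhdsWithin 0 (Set.Ioi 0))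
      (nhds (4 * Real.pi / 3 * f (p 0)))) :
    2 * m R / R ≤ 8 / 9 :=
  buchdahl_surface_inequality_general R hR f hf_mono hf_pos m p hm_cont hp_cont hm0 hm_pos h2m
    hp_pos hpR hTOV_m hTOV_p
end

section
/- For all real numbers M ≥ 0 and P ≥ 0, the inequality 2(2M+P) − (3M+P)² ≥ 0 holds if and only if 2M ≤ (4/9)·(1 − (3/2)P + √(1 + (3/2)P)). (With M = m/r and P = 4π r² p this is the equivalence between the two forms of the complete Buchdahl inequality, since (3/2)P = 6π r² p.) -/
/-- For all reals `M ≥ 0`, `P ≥ 0`: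
`2(2M+P) − (3M+P)² ≥ 0 ↔ 2M ≤ (4/9)(1 − (3/2)P + √(1 + (3/2)P))`.
(The equivalence between the two forms of the complete Buchdahl inequality.) -/
theorem buchdahl_inequality_two_forms (M P : ℝ) (hM : 0 ≤ M) (hP : 0 ≤ P) :
    0 ≤ 2 * (2 * M + P) - (3 * M + P) ^ 2 ↔
      2 * M ≤ 4 / 9 * (1 - 3 / 2 * P + Real.sqrt (1 + 3 / 2 * P)) := by
  set s := Real.sqrt (1 + 3 / 2 * P) with hsdef
  have hs2 : s ^ 2 = 1 + 3 / 2 * P := Real.sq_sqrt (by linarith)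
  have hs1 : 1 ≤ s := by
    rw [hsdef]
    exact Real.one_le_sqrt.mpr (by linarith)
  constructor
  · intro h
    nlinarith [sq_nonneg (9 * M + 3 * P - 2 + 2 * s), sq_nonneg (9 * M + 3 * P - 2 - 2 * s)]
  · intro h
    nlinarith [mul_nonneg (by nlinarith : (0:ℝ) ≤ 2 * s - (9 * M + 3 * P - 2))
      (by nlinarith : (0:ℝ) ≤ 2 * s + (9 * M + 3 * P - 2))]
end

section
/- Let g ∈ (0,4) and σ ≥ 0. Then 36(1−U)² − g·(3(1−U)+σU)² > 0 for all U ∈ [0, 3/4] if and only if σ < 2/√g − 1. -/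
/-!
Since `1 - U > 0` and `3(1-U) + σU ≥ 0` on `[0, 3/4]`, the numerator is positive exactly when
`√g (3(1-U) + σU) < 6(1-U)`. Because `σU ≤ 3σ(1-U)` there, with equality at `U = 3/4`, the
left side is at most `3√g(1+σ)(1-U)`, so the worst case is `U = 3/4`, where the condition
reads `√g (1+σ) < 2`.
-/

open Real Set

theorem sq_sub_mul_sq_pos_iff {a b g : ℝ} (ha : 0 ≤ a) (hb : 0 ≤ b) (hg : 0 ≤ g) :
    0 < a ^ 2 - g * b ^ 2 ↔ √g * b < a := by
  rw [← sq_sqrt hg, ← mul_pow, sq_sqrt hg, sub_pos,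
    sq_lt_sq₀ (mul_nonneg (sqrt_nonneg g) hb) ha]

theorem three_mul_one_sub_add_mul_le {σ U : ℝ} (hσ : 0 ≤ σ) (hU : U ≤ 3 / 4) :
    3 * (1 - U) + σ * U ≤ 3 * (1 + σ) * (1 - U) := by
  nlinarith [mul_nonneg hσ (by linarith : (0 : ℝ) ≤ 3 - 4 * U)]

theorem numerator_pos_iff {g σ U : ℝ} (hg : 0 ≤ g) (hσ : 0 ≤ σ) (hU : U ∈ Icc (0 : ℝ) 1) :
    0 < 36 * (1 - U) ^ 2 - g * (3 * (1 - U) + σ * U) ^ 2 ↔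
      √g * (3 * (1 - U) + σ * U) < 6 * (1 - U) := by
  obtain ⟨hU0, hU1⟩ := hU
  rw [show 36 * (1 - U) ^ 2 = (6 * (1 - U)) ^ 2 by ring]
  exact sq_sub_mul_sq_pos_iff (by linarith) (by nlinarith) hg

theorem numerator_positive_iff_sigma_bound_general (g σ : ℝ) (hg0 : 0 < g)
    (hσ : 0 ≤ σ) :
    (∀ U ∈ Set.Icc (0:ℝ) (3 / 4),
        0 < 36 * (1 - U) ^ 2 - g * (3 * (1 - U) + σ * U) ^ 2) ↔
      σ < 2 / Real.sqrt g - 1 := by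
  have hs : 0 < √g := sqrt_pos.mpr hg0
  have hpos : ∀ U ∈ Icc (0 : ℝ) (3 / 4), 0 < 36 * (1 - U) ^ 2 - g * (3 * (1 - U) + σ * U) ^ 2 ↔
      √g * (3 * (1 - U) + σ * U) < 6 * (1 - U) :=
    fun U hU => numerator_pos_iff hg0.le hσ ⟨hU.1, by linarith [hU.2]⟩
  rw [lt_sub_iff_add_lt, lt_div_iff₀ hs]
  constructor
  · intro h
    have hend := (hpos (3 / 4) ⟨by norm_num, le_rfl⟩).1 (h _ ⟨by norm_num, le_rfl⟩)
    linarith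
  · intro h U hU
    rw [hpos U hU]
    calc √g * (3 * (1 - U) + σ * U) ≤ √g * (3 * (1 + σ) * (1 - U)) :=
          mul_le_mul_of_nonneg_left (three_mul_one_sub_add_mul_le hσ hU.2) hs.le
      _ = 3 * (1 - U) * ((σ + 1) * √g) := by ring
      _ < 3 * (1 - U) * 2 := mul_lt_mul_of_pos_left h (by linarith [hU.2])
      _ = 6 * (1 - U) := by ring

/-- Let `g ∈ (0,4)` and `σ ≥ 0`. Then
`36(1−U)² − g(3(1−U)+σU)² > 0` for all `U ∈ [0, 3/4]` if and only if `σ < 2/√g − 1`. -/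
theorem numerator_positive_iff_sigma_bound (g σ : ℝ) (hg0 : 0 < g) (hg4 : g < 4)
    (hσ : 0 ≤ σ) :
    (∀ U ∈ Set.Icc (0:ℝ) (3 / 4),
        0 < 36 * (1 - U) ^ 2 - g * (3 * (1 - U) + σ * U) ^ 2) ↔
      σ < 2 / Real.sqrt g - 1 :=
  numerator_positive_iff_sigma_bound_general g σ hg0 hσ
end
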